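/- arXiv:1611.04535 — 9 statements merged into one kernel-verified Lean document; each statement's English description precedes it below -/
import Mathlib

section
/- Fix n ≥ 1, an n×n real matrix A, vectors u_1, …, u_n ∈ ℝ^n, and Z ∈ ℝ^n, and let F(s) = slin_s(A,u,Z) for s > 0. If 0 < s₁ < s₂ and the open interval (s₁, s₂) contains none of the values |⟨u_i, Z⟩| for i = 1, …, n, then there exist real numbers a, b, c such that F(s) = a/s² + b/s + c for every s ∈ (s₁, s₂). In particular, F consists of at most n+1 such piecewise components on (0, ∞), and any border between two components lies at some s = |⟨u_i, Z⟩|. -/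
/-- The `s`-linear rounding function `φ_s`. -/
noncomputable def phi (s y : ℝ) : ℝ := if y < -s then -1 else if y ≤ s then y / s else 1

/-- `slin_s(A, u, Z) = Σ_{i,j} A i j · φ_s(⟨u_i, Z⟩) · φ_s(⟨u_j, Z⟩)`. -/
noncomputable def slin (n : ℕ) (s : ℝ) (A : Fin n → Fin n → ℝ) (u : Fin n → Fin n → ℝ)
    (Z : Fin n → ℝ) : ℝ :=
  ∑ i, ∑ j, A i j * phi s (∑ k, u i k * Z k) * phi s (∑ k, u j k * Z k)

/-!
On an interval of scales avoiding every breakpoint `|⟨u_i, Z⟩|`, each rounding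
`φ_s(⟨u_i, Z⟩)` stays on one branch, so it is either `⟨u_i, Z⟩ · s⁻¹` or a constant `±1`.
Either way it is affine in `s⁻¹`, and a quadratic form in affine functions of `s⁻¹`
is a quadratic polynomial in `s⁻¹`.
-/

lemma phi_of_abs_le {s y : ℝ} (h : |y| ≤ s) : phi s y = y * s⁻¹ := by
  rw [abs_le] at h
  simp [phi, not_lt.2 h.1, h.2, div_eq_mul_inv]

lemma phi_of_lt {s y : ℝ} (hs : 0 ≤ s) (h : s < y) : phi s y = 1 := by
  simp [phi, not_lt.2 (by linarith : -s ≤ y), not_le.2 h]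

lemma phi_of_lt_neg {s y : ℝ} (h : y < -s) : phi s y = -1 := by
  simp [phi, h]

lemma exists_phi_eq_mul_inv_add_of_abs_notMem_Ioo {s₁ s₂ y : ℝ} (hs₁ : 0 ≤ s₁)
    (hy : |y| ∉ Set.Ioo s₁ s₂) :
    ∃ p q : ℝ, ∀ s ∈ Set.Ioo s₁ s₂, phi s y = p * s⁻¹ + q := by
  rcases le_or_gt |y| s₁ with hle | hgt
  · exact ⟨y, 0, fun s hs => by rw [phi_of_abs_le (hle.trans hs.1.le), add_zero]⟩
  have hs₂ : s₂ ≤ |y| := not_lt.1 fun h => hy ⟨hgt, h⟩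
  rcases le_or_gt 0 y with hy0 | hy0
  · rw [abs_of_nonneg hy0] at hs₂
    exact ⟨0, 1, fun s hs => by
      rw [phi_of_lt (hs₁.trans hs.1.le) (hs.2.trans_le hs₂)]; ring⟩
  · rw [abs_of_neg hy0] at hs₂
    exact ⟨0, -1, fun s hs => by rw [phi_of_lt_neg (by linarith [hs.2])]; ring⟩

lemma exists_quadraticForm_affine_eq {ι : Type*} [Fintype ι] (A : ι → ι → ℝ) (p q : ι → ℝ) :
    ∃ a b c : ℝ, ∀ x : ℝ,
      ∑ i, ∑ j, A i j * (p i * x + q i) * (p j * x + q j) = a * x ^ 2 + b * x + c := by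
  refine ⟨∑ i, ∑ j, A i j * p i * p j, ∑ i, ∑ j, A i j * (p i * q j + q i * p j),
    ∑ i, ∑ j, A i j * q i * q j, fun x => ?_⟩
  simp only [Finset.sum_mul, ← Finset.sum_add_distrib]
  exact Finset.sum_congr rfl fun i _ => Finset.sum_congr rfl fun j _ => by ring

theorem stmt_2_general (n : ℕ) (A u : Fin n → Fin n → ℝ) (Z : Fin n → ℝ)
    (s₁ s₂ : ℝ) (hs₁ : 0 < s₁)
    (hno : ∀ i : Fin n, |∑ k, u i k * Z k| ∉ Set.Ioo s₁ s₂) :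
    ∃ a b c : ℝ, ∀ s ∈ Set.Ioo s₁ s₂, slin n s A u Z = a / s ^ 2 + b / s + c := by
  choose p q hpq using fun i => exists_phi_eq_mul_inv_add_of_abs_notMem_Ioo hs₁.le (hno i)
  obtain ⟨a, b, c, habc⟩ := exists_quadraticForm_affine_eq A p q
  refine ⟨a, b, c, fun s hs => ?_⟩
  simp only [slin, hpq _ s hs, habc, div_eq_mul_inv, inv_pow]

theorem stmt_2 (n : ℕ) (hn : 1 ≤ n) (A u : Fin n → Fin n → ℝ) (Z : Fin n → ℝ)
    (s₁ s₂ : ℝ) (hs₁ : 0 < s₁) (hs₁₂ : s₁ < s₂)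
    (hno : ∀ i : Fin n, |∑ k, u i k * Z k| ∉ Set.Ioo s₁ s₂) :
    ∃ a b c : ℝ, ∀ s ∈ Set.Ioo s₁ s₂, slin n s A u Z = a / s ^ 2 + b / s + c :=
  stmt_2_general n A u Z s₁ s₂ hs₁ hno
end

section
/- There exists a universal constant C > 0 such that for every n ≥ 2 and m ≥ 1 the following holds. Suppose there are m triples (A^{(k)}, u^{(k)}, Z^{(k)}) for k = 1, …, m, where each A^{(k)} is an n×n real matrix, u^{(k)} = (u^{(k)}_1, …, u^{(k)}_n) is a tuple of vectors in ℝ^n, and Z^{(k)} ∈ ℝ^n, together with witnesses r_1, …, r_m ∈ ℝ, such that for every subset T ⊆ {1, …, m} there exists s_T > 0 with slin_{s_T}(A^{(k)}, u^{(k)}, Z^{(k)}) > r_k if and only if k ∈ T. Then m ≤ C · log n. (That is, the pseudo-dimension of the class of functions {(A,u,Z) ↦ slin_s(A,u,Z) : s > 0} on size-n instances is O(log n).) -/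
/-! Write `y i = ⟨u i, Z⟩`. Between consecutive thresholds `|y i|` the set of coordinates at
which `φ_s` is linear does not change, and there `s² (slin_s - r)` is a polynomial of degree at
most two in `s`. So `s ↦ [r < slin_s]` can only change across `3n + 2` points: the thresholds and
the roots of `n + 1` quadratics. For `m` instances the pattern `s ↦ ([r k < slin_s])_k` therefore
changes only across `m (3n + 2)` points, so it takes at most `2 m (3n + 2) + 1` values on `(0, ∞)`.
Shattering needs all `2 ^ m` patterns, and `2 ^ m ≤ 2 m (3n + 2) + 1` forces `m = O(log n)`. -/

open Finset Polynomial

def ChangesOnlyAcross {α : Type*} (g : ℝ → α) (D : Set ℝ) (P : Finset ℝ) : Prop :=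
  ∀ ⦃x⦄, x ∈ D → ∀ ⦃x'⦄, x' ∈ D → x ≤ x' → g x ≠ g x' → ∃ p ∈ P, x ≤ p ∧ p ≤ x'

namespace ChangesOnlyAcross

variable {α : Type*} {g : ℝ → α} {D : Set ℝ} {P : Finset ℝ}

theorem pi {ι : Type*} [Fintype ι] {β : ι → Type*} {g : ∀ k, ℝ → β k} {P : ι → Finset ℝ}
    (h : ∀ k, ChangesOnlyAcross (g k) D (P k)) :
    ChangesOnlyAcross (fun x k => g k x) D (univ.biUnion P) := by
  intro x hx x' hx' hxx' hne
  obtain ⟨k, hk⟩ := Function.ne_iff.mp hne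
  obtain ⟨p, hp, hxp, hpx'⟩ := h k hx hx' hxx' hk
  exact ⟨p, mem_biUnion.mpr ⟨k, mem_univ k, hp⟩, hxp, hpx'⟩

/-- `crossingIndex P x` counts the points of `P` below `x` twice over, strictly and weakly, so
that it separates every point of `P` from the open gaps next to it. -/
noncomputable def crossingIndex (P : Finset ℝ) (x : ℝ) : ℕ := #{p ∈ P | p < x} + #{p ∈ P | p ≤ x}

theorem eq_of_crossingIndex_eq (h : ChangesOnlyAcross g D P) {x x' : ℝ} (hx : x ∈ D)
    (hx' : x' ∈ D) (hxx' : x ≤ x') (hc : crossingIndex P x = crossingIndex P x') :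
    g x = g x' := by
  by_contra hne
  obtain ⟨p, hp, hxp, hpx'⟩ := h hx hx' hxx' hne
  have hlt : {p ∈ P | p < x} ⊆ {p ∈ P | p < x'} := fun q hq => by
    rw [mem_filter] at hq ⊢; exact ⟨hq.1, hq.2.trans_le hxx'⟩
  have hle : {p ∈ P | p ≤ x} ⊆ {p ∈ P | p ≤ x'} := fun q hq => by
    rw [mem_filter] at hq ⊢; exact ⟨hq.1, hq.2.trans hxx'⟩
  have hlt_eq := eq_of_subset_of_card_le hlt (by
    have := card_le_card hle; unfold crossingIndex at hc; omega)
  have hle_eq := eq_of_subset_of_card_le hle (by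
    have := card_le_card hlt; unfold crossingIndex at hc; omega)
  have hpx : p ∈ {p ∈ P | p ≤ x} := by rw [hle_eq]; exact mem_filter.mpr ⟨hp, hpx'⟩
  rcases hxx'.lt_or_eq with hlt' | rfl
  · have hpx : p ∈ {p ∈ P | p < x} := by
      rw [hlt_eq]; exact mem_filter.mpr ⟨hp, (mem_filter.mp hpx).2.trans_lt hlt'⟩
    exact (mem_filter.mp hpx).2.not_ge hxp
  · exact hne rfl

theorem card_le {ι : Type*} [Fintype ι] (h : ChangesOnlyAcross g D P) (s : ι → ℝ)
    (hs : ∀ i, s i ∈ D) (hinj : Function.Injective (g ∘ s)) :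
    Fintype.card ι ≤ 2 * #P + 1 := by
  have hmaps : ∀ i ∈ (univ : Finset ι), crossingIndex P (s i) ∈ range (2 * #P + 1) := by
    intro i _
    have h1 := card_filter_le P (· < s i)
    have h2 := card_filter_le P (· ≤ s i)
    rw [mem_range, crossingIndex]
    omega
  have hinjOn : Set.InjOn (fun i => crossingIndex P (s i)) (univ : Finset ι) := by
    intro i _ j _ hij
    apply hinj
    rcases le_total (s i) (s j) with hle | hle
    · exact h.eq_of_crossingIndex_eq (hs i) (hs j) hle hij
    · exact (h.eq_of_crossingIndex_eq (hs j) (hs i) hle hij.symm).symm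
  simpa using card_le_card_of_injOn _ hmaps hinjOn

end ChangesOnlyAcross

theorem Polynomial.changesOnlyAcross_roots (p : ℝ[X]) :
    ChangesOnlyAcross (fun x => 0 < p.eval x) Set.univ p.roots.toFinset := by
  intro x _ x' _ hxx' hne
  have hcont : ContinuousOn (fun t => p.eval t) (Set.Icc x x') := p.continuousOn
  have hroot : ∃ t ∈ Set.Icc x x', p.eval t = 0 := by
    by_cases hx : 0 < p.eval x
    · have hx' : p.eval x' ≤ 0 := by simpa [hx] using hne
      exact intermediate_value_Icc' hxx' hcont ⟨hx', hx.le⟩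
    · have hx' : 0 < p.eval x' := by simpa [hx] using hne
      exact intermediate_value_Icc hxx' hcont ⟨not_lt.mp hx, hx'.le⟩
  obtain ⟨t, ⟨hxt, htx'⟩, ht⟩ := hroot
  have hp : p ≠ 0 := by rintro rfl; simp at hne
  exact ⟨t, Multiset.mem_toFinset.mpr ((mem_roots hp).mpr ht), hxt, htx'⟩

section SlinPolynomial

variable {n : ℕ}

theorem mul_phi_of_abs_le {s y : ℝ} (hs : 0 < s) (h : |y| ≤ s) : s * phi s y = y := by
  obtain ⟨h₁, h₂⟩ := abs_le.mp h
  rw [phi, if_neg h₁.not_gt, if_pos h₂]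
  field_simp

theorem phi_of_lt_abs {s y : ℝ} (hs : 0 ≤ s) (h : s < |y|) : phi s y = Real.sign y := by
  rcases lt_abs.mp h with hy | hy
  · rw [phi, if_neg (by linarith), if_neg hy.not_ge, Real.sign_of_pos (by linarith)]
  · rw [phi, if_pos (by linarith), Real.sign_of_neg (by linarith)]

noncomputable def linearIndices (y : Fin n → ℝ) (s : ℝ) : Finset (Fin n) := {i | |y i| ≤ s}

@[simp]
theorem mem_linearIndices {y : Fin n → ℝ} {s : ℝ} {i : Fin n} :
    i ∈ linearIndices y s ↔ |y i| ≤ s := by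
  simp [linearIndices]

/-- On a range of scales `s` where exactly the coordinates in `I` satisfy `|y i| ≤ s`,
`s * phi s (y i)` is the value at `s` of this polynomial of degree at most one. -/
noncomputable def scaledPhiPoly (y : Fin n → ℝ) (I : Finset (Fin n)) (i : Fin n) : ℝ[X] :=
  if i ∈ I then C (y i) else C (Real.sign (y i)) * X

noncomputable def slinPoly (A : Fin n → Fin n → ℝ) (y : Fin n → ℝ) (I : Finset (Fin n)) : ℝ[X] :=
  ∑ i, ∑ j, C (A i j) * scaledPhiPoly y I i * scaledPhiPoly y I j

theorem natDegree_scaledPhiPoly_le (y : Fin n → ℝ) (I : Finset (Fin n)) (i : Fin n) :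
    (scaledPhiPoly y I i).natDegree ≤ 1 := by
  unfold scaledPhiPoly
  split_ifs
  · simp
  · exact (natDegree_C_mul_le _ _).trans natDegree_X_le

theorem natDegree_slinPoly_le (A : Fin n → Fin n → ℝ) (y : Fin n → ℝ) (I : Finset (Fin n)) :
    (slinPoly A y I).natDegree ≤ 2 := by
  refine natDegree_sum_le_of_forall_le _ _ fun i _ =>
    natDegree_sum_le_of_forall_le _ _ fun j _ => ?_
  calc (C (A i j) * scaledPhiPoly y I i * scaledPhiPoly y I j).natDegree
      ≤ (C (A i j) * scaledPhiPoly y I i).natDegree + (scaledPhiPoly y I j).natDegree :=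
        natDegree_mul_le
    _ ≤ 1 + 1 := add_le_add ((natDegree_C_mul_le _ _).trans (natDegree_scaledPhiPoly_le y I i))
        (natDegree_scaledPhiPoly_le y I j)

theorem eval_scaledPhiPoly {s : ℝ} (hs : 0 < s) (y : Fin n → ℝ) (i : Fin n) :
    (scaledPhiPoly y (linearIndices y s) i).eval s = s * phi s (y i) := by
  by_cases h : |y i| ≤ s
  · simp [scaledPhiPoly, h, mul_phi_of_abs_le hs h]
  · simp [scaledPhiPoly, h, phi_of_lt_abs hs.le (not_le.mp h), mul_comm s]

theorem eval_slinPoly {s : ℝ} (hs : 0 < s) (A : Fin n → Fin n → ℝ) (y : Fin n → ℝ) :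
    (slinPoly A y (linearIndices y s)).eval s =
      s ^ 2 * ∑ i, ∑ j, A i j * phi s (y i) * phi s (y j) := by
  simp only [slinPoly, eval_finsetSum, eval_mul, eval_C, eval_scaledPhiPoly hs, mul_sum]
  refine sum_congr rfl fun i _ => sum_congr rfl fun j _ => ?_
  ring

noncomputable def linearRegimes (y : Fin n → ℝ) : Finset (Finset (Fin n)) :=
  insert ∅ (univ.image fun j => linearIndices y |y j|)

theorem card_linearRegimes_le (y : Fin n → ℝ) : #(linearRegimes y) ≤ n + 1 :=
  (card_insert_le _ _).trans (by simpa using card_image_le (s := (univ : Finset (Fin n))))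

theorem linearIndices_mem_linearRegimes (y : Fin n → ℝ) (x : ℝ) :
    linearIndices y x ∈ linearRegimes y := by
  rcases (linearIndices y x).eq_empty_or_nonempty with h | h
  · exact h ▸ mem_insert_self _ _
  obtain ⟨j, hj, hmax⟩ := exists_max_image _ (fun i => |y i|) h
  refine mem_insert_of_mem (mem_image.mpr ⟨j, mem_univ j, ?_⟩)
  ext i
  simp only [mem_linearIndices] at hj hmax ⊢
  exact ⟨fun hi => hi.trans hj, hmax i⟩

theorem linearIndices_eq_of_forall_lt_abs {y : Fin n → ℝ} {x x' : ℝ} (hxx' : x ≤ x')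
    (h : ∀ i, x ≤ |y i| → x' < |y i|) : linearIndices y x = linearIndices y x' := by
  ext i
  simp only [mem_linearIndices]
  exact ⟨fun hi => hi.trans hxx', fun hi => not_lt.mp fun hlt => (h i hlt.le).not_ge hi⟩

end SlinPolynomial

theorem slin_changesOnlyAcross {n : ℕ} (A u : Fin n → Fin n → ℝ) (Z : Fin n → ℝ) (r : ℝ) :
    ∃ P : Finset ℝ, #P ≤ 3 * n + 2 ∧
      ChangesOnlyAcross (fun s => r < slin n s A u Z) (Set.Ioi 0) P := by
  set y : Fin n → ℝ := fun i => ∑ k, u i k * Z k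
  set q : Finset (Fin n) → ℝ[X] := fun I => slinPoly A y I - C r * X ^ 2
  have hq : ∀ s : ℝ, 0 < s → (r < slin n s A u Z ↔ 0 < (q (linearIndices y s)).eval s) := by
    intro s hs
    have : (q (linearIndices y s)).eval s = s ^ 2 * (slin n s A u Z - r) := by
      simp only [q, eval_sub, eval_slinPoly hs, eval_mul, eval_C, eval_pow, eval_X, slin, y]
      ring
    rw [this, mul_pos_iff_of_pos_left (by positivity), sub_pos]
  set thresholds := univ.image fun i => |y i|
  set regimeRoots := (linearRegimes y).biUnion fun I => (q I).roots.toFinset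
  refine ⟨thresholds ∪ regimeRoots, ?_, ?_⟩
  · have hroots : ∀ I ∈ linearRegimes y, #(q I).roots.toFinset ≤ 2 := fun I _ =>
      calc #(q I).roots.toFinset ≤ Multiset.card (q I).roots := Multiset.toFinset_card_le _
        _ ≤ (q I).natDegree := card_roots' _
        _ ≤ 2 := natDegree_sub_le_of_le (natDegree_slinPoly_le A y I)
            ((natDegree_C_mul_le _ _).trans (natDegree_X_pow_le 2))
    calc #(thresholds ∪ regimeRoots) ≤ #thresholds + #regimeRoots := card_union_le _ _
      _ ≤ n + (n + 1) * 2 := add_le_add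
          (by simpa using card_image_le (s := (univ : Finset (Fin n))))
          ((card_biUnion_le_card_mul _ _ _ hroots).trans
            (Nat.mul_le_mul_right 2 (card_linearRegimes_le y)))
      _ = 3 * n + 2 := by ring
  · intro x hx x' hx' hxx' hne
    by_cases hthreshold : ∃ i, x ≤ |y i| ∧ |y i| ≤ x'
    · obtain ⟨i, hxi, hix'⟩ := hthreshold
      exact ⟨|y i|, mem_union_left _ (mem_image_of_mem _ (mem_univ i)), hxi, hix'⟩
    push Not at hthreshold
    have hsign :
        (0 < (q (linearIndices y x')).eval x) ≠ (0 < (q (linearIndices y x')).eval x') := by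
      rwa [← hq x' hx', ← linearIndices_eq_of_forall_lt_abs hxx' hthreshold, ← hq x hx]
    obtain ⟨p, hp, hxp, hpx'⟩ := (q _).changesOnlyAcross_roots trivial trivial hxx' hsign
    refine ⟨p, mem_union_right _ (mem_biUnion.mpr ⟨_, ?_, hp⟩), hxp, hpx'⟩
    exact linearIndices_mem_linearRegimes y x'

theorem two_pow_half_lt {m n : ℕ} (hn : 0 < n) (h : 2 ^ m ≤ 12 * m * n + 1) :
    2 ^ (m / 2) < 24 * n := by
  set k := m / 2
  have hm : m ≤ 2 * k + 1 := by omega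
  have hk : k + 1 ≤ 2 ^ k := Nat.lt_two_pow_self
  have hsq : 2 ^ k * 2 ^ k ≤ 2 ^ m := by
    rw [← pow_add]; exact Nat.pow_le_pow_right two_pos (by omega)
  nlinarith

theorem natCast_le_mul_log_of_two_pow_le {m n : ℕ} (hn : 2 ≤ n)
    (h : 2 ^ m ≤ 2 * (m * (3 * n + 2)) + 1) : (m : ℝ) ≤ 13 / Real.log 2 * Real.log n := by
  have hhalf := two_pow_half_lt (m := m) (n := n) (by omega) (by nlinarith)
  have hlog2 : 0 < Real.log 2 := Real.log_pos one_lt_two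
  have hlogn : Real.log 2 ≤ Real.log n := Real.log_le_log two_pos (by exact_mod_cast hn)
  have hhalf_log : Real.log ((2 : ℝ) ^ (m / 2)) ≤ Real.log (2 ^ 5 * n) := by
    refine Real.log_le_log (by positivity) ?_
    have : ((2 ^ (m / 2) : ℕ) : ℝ) ≤ 24 * n := by exact_mod_cast hhalf.le
    push_cast at this
    linarith
  rw [Real.log_pow, Real.log_mul (by positivity) (by positivity), Real.log_pow] at hhalf_log
  have hm : (m : ℝ) ≤ 2 * ((m / 2 : ℕ) : ℝ) + 1 := by
    exact_mod_cast (by omega : m ≤ 2 * (m / 2) + 1)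
  rw [div_mul_eq_mul_div, le_div_iff₀ hlog2]
  nlinarith

theorem stmt_3 :
    ∃ C : ℝ, 0 < C ∧
      ∀ (n m : ℕ), 2 ≤ n → 1 ≤ m →
      ∀ (A u : Fin m → Fin n → Fin n → ℝ) (Z : Fin m → Fin n → ℝ) (r : Fin m → ℝ),
        (∀ T : Finset (Fin m), ∃ s : ℝ, 0 < s ∧
          ∀ k : Fin m, (r k < slin n s (A k) (u k) (Z k) ↔ k ∈ T)) →
        (m : ℝ) ≤ C * Real.log n := by
  refine ⟨13 / Real.log 2, by positivity, fun n m hn _ A u Z r hshatter => ?_⟩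
  choose s hs_pos hs_pattern using hshatter
  choose P hP_card hP using fun k => slin_changesOnlyAcross (A k) (u k) (Z k) (r k)
  have hinj : Function.Injective ((fun x k => r k < slin n x (A k) (u k) (Z k)) ∘ s) := by
    intro T T' h
    ext k
    simpa only [Function.comp_apply, hs_pattern, eq_iff_iff] using congrFun h k
  have hcard := (ChangesOnlyAcross.pi hP).card_le s hs_pos hinj
  have hP_union : #(univ.biUnion P) ≤ m * (3 * n + 2) := by
    simpa using card_biUnion_le_card_mul univ P _ fun k _ => hP_card k
  rw [Fintype.card_finset, Fintype.card_fin] at hcard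
  exact natCast_le_mul_log_of_two_pow_le hn (by omega)
end

section
/- There exists a constant c > 0 such that for every sufficiently large n there exist a natural number m with m ≥ c · log n, an n×n real symmetric matrix A with nonnegative entries and zero diagonal, unit vectors u_1, …, u_n ∈ ℝ^n, vectors Z^{(1)}, …, Z^{(m)} ∈ ℝ^n, and witnesses r_1, …, r_m ∈ ℝ, such that for every subset T ⊆ {1, …, m} there exists s_T > 0 with slin_{s_T}(A, u, Z^{(j)}) > r_j if and only if j ∈ T. (That is, the pseudo-dimension of the class of functions {(A,u,Z) ↦ slin_s(A,u,Z) : s > 0} on size-n instances is Ω(log n).) -/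
/-! For `s = 4⁻ᵖ`, a coordinate `4⁻ᵏ` is rounded by `φ_s` to `1` when `k ≤ p` and to `4^(p-k)`
when `k > p`. On a star graph whose centre coordinate is `1`, `slin_s = 2 Σₖ φ_s(Z k)` over the
leaves. Let the leaf at level `k` of `Z⁽ʲ⁾` be `4⁻ᵏ` times the jump `bⱼ(k) - bⱼ(k-1)` of the `j`-th
binary digit; since `φ_s` is odd these signs pass through the rounding, and at `s = 4⁻ᵖ` the sum
telescopes to `bⱼ(p)` up to a geometric tail of at most `1/3`. Thresholding at `1` therefore reads
off the `j`-th bit of `p`, and letting `p` range over `[0, 2^m)` shatters the samples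
`Z⁽⁰⁾, …, Z⁽ᵐ⁻¹⁾` with `m = ⌊log₂ (n - 1)⌋`. -/

open Finset

section Rounding

variable {s : ℝ}

lemma phi_neg (hs : 0 ≤ s) (y : ℝ) : phi s (-y) = -phi s y := by
  unfold phi
  split_ifs <;> first | (exfalso; linarith) | ring

lemma phi_eq_one {y : ℝ} (hs : 0 < s) (h : s ≤ y) : phi s y = 1 := by
  unfold phi
  split_ifs with h₁ h₂
  · linarith
  · rw [le_antisymm h₂ h, div_self hs.ne']
  · rfl

lemma phi_eq_div {y : ℝ} (h₁ : -s ≤ y) (h₂ : y ≤ s) : phi s y = y / s := by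
  unfold phi
  rw [if_neg h₁.not_gt, if_pos h₂]

lemma phi_intCast_mul (hs : 0 ≤ s) {e : ℤ} (he : |e| ≤ 1) (y : ℝ) :
    phi s (e * y) = e * phi s y := by
  obtain ⟨he₁, he₂⟩ := abs_le.mp he
  interval_cases e
  · simpa using phi_neg hs y
  · simpa using phi_eq_div (neg_nonpos.mpr hs) hs
  · simp

end Rounding

lemma slin_one (n : ℕ) (s : ℝ) (A : Fin n → Fin n → ℝ) (Z : Fin n → ℝ) :
    slin n s A (1 : Matrix (Fin n) (Fin n) ℝ) Z = ∑ i, ∑ j, A i j * phi s (Z i) * phi s (Z j) := by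
  simp [slin, Matrix.one_apply]

def starWeights (n : ℕ) (i j : Fin (n + 1)) : ℝ := if i ≠ j ∧ (i = 0 ∨ j = 0) then 1 else 0

lemma sum_sum_starWeights_mul (n : ℕ) (x : Fin (n + 1) → ℝ) :
    ∑ i, ∑ j, starWeights n i j * x i * x j = 2 * x 0 * ∑ k : Fin n, x k.succ := by
  simp [starWeights, Fin.sum_univ_succ, Fin.succ_ne_zero, (Fin.succ_ne_zero _).symm, ← sum_mul,
    ← mul_sum]
  ring

lemma abs_sum_mul_phi_pow_sub_le {q : ℝ} (hq₀ : 0 < q) (hq₁ : q < 1) (d : ℕ → ℝ)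
    (hd : ∀ k, |d k| ≤ 1) {p K : ℕ} (hpK : p < K) :
    |∑ k ∈ range K, d k * phi (q ^ p) (q ^ k) - ∑ k ∈ range (p + 1), d k| ≤ q / (1 - q) := by
  have hqp : 0 < q ^ p := pow_pos hq₀ p
  have head : ∑ k ∈ range (p + 1), d k * phi (q ^ p) (q ^ k) = ∑ k ∈ range (p + 1), d k := by
    refine sum_congr rfl fun k hk => ?_
    have hkp : k ≤ p := Nat.lt_succ_iff.mp (mem_range.mp hk)
    rw [phi_eq_one hqp (pow_le_pow_of_le_one hq₀.le hq₁.le hkp), mul_one]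
  have tail : ∀ k ∈ Ico (p + 1) K, |d k * phi (q ^ p) (q ^ k)| ≤ q ^ k / q ^ p := by
    intro k hk
    have hkp : p ≤ k := by linarith [(mem_Ico.mp hk).1]
    have hqk : 0 ≤ q ^ k := pow_nonneg hq₀.le k
    rw [phi_eq_div (by linarith) (pow_le_pow_of_le_one hq₀.le hq₁.le hkp), abs_mul,
      abs_of_nonneg (div_nonneg hqk hqp.le)]
    exact mul_le_of_le_one_left (div_nonneg hqk hqp.le) (hd k)
  rw [← sum_range_add_sum_Ico _ hpK, head, add_sub_cancel_left]
  calc |∑ k ∈ Ico (p + 1) K, d k * phi (q ^ p) (q ^ k)|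
      ≤ ∑ k ∈ Ico (p + 1) K, q ^ k / q ^ p := (abs_sum_le_sum_abs _ _).trans (sum_le_sum tail)
    _ = (∑ k ∈ Ico (p + 1) K, q ^ k) / q ^ p := (sum_div _ _ _).symm
    _ ≤ q ^ (p + 1) / (1 - q) / q ^ p := by
      gcongr
      exact geom_sum_Ico_le_of_lt_one hq₀.le hq₁
    _ = q / (1 - q) := by
      field_simp
      ring

def bitJump (j k : ℕ) : ℤ := (k.testBit j).toNat - ((k - 1).testBit j).toNat

lemma abs_bitJump_le (j k : ℕ) : |bitJump j k| ≤ 1 := by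
  have h₁ := Bool.toNat_le (k.testBit j)
  have h₂ := Bool.toNat_le ((k - 1).testBit j)
  rw [bitJump, abs_le]
  omega

lemma sum_range_bitJump (j p : ℕ) :
    ∑ k ∈ range (p + 1), (bitJump j k : ℝ) = (p.testBit j).toNat := by
  rw [sum_range_succ']
  simp only [bitJump, Nat.add_sub_cancel, Nat.zero_testBit, Bool.toNat_false]
  push_cast
  rw [sum_range_sub (fun k => ((k.testBit j).toNat : ℝ))]
  simp

lemma testBit_sum_two_pow (S : Finset ℕ) (j : ℕ) : (∑ i ∈ S, 2 ^ i).testBit j ↔ j ∈ S := by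
  rw [← Nat.mem_bitIndices, ← List.mem_toFinset, toFinset_bitIndices_sum_two_pow]

lemma log_succ_le_two_mul_natLog {n : ℕ} (hn : 2 ≤ n) : Real.log (n + 1) ≤ 2 * Nat.log 2 n := by
  have hL : (1 : ℝ) ≤ Nat.log 2 n := by
    exact_mod_cast Nat.le_log_of_pow_le one_lt_two (by simpa using hn)
  have hlt : n + 1 ≤ 2 ^ (Nat.log 2 n + 1) := Nat.lt_pow_succ_log_self one_lt_two n
  have hlog : Real.log (n + 1) ≤ (Nat.log 2 n + 1) * Real.log 2 := by
    calc Real.log (n + 1) ≤ Real.log (2 ^ (Nat.log 2 n + 1)) :=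
          Real.log_le_log (by positivity) (by exact_mod_cast hlt)
      _ = (Nat.log 2 n + 1) * Real.log 2 := by rw [Real.log_pow]; push_cast; ring
  nlinarith [Real.log_nonneg one_le_two, Real.log_two_lt_d9]

noncomputable def levelVector (n j : ℕ) : Fin (n + 1) → ℝ :=
  Fin.cons 1 fun k : Fin n => bitJump j k * (1 / 4 : ℝ) ^ (k : ℕ)

lemma abs_slin_levelVector_sub_le {n p : ℕ} (hp : p < n) (j : ℕ) :
    |slin (n + 1) ((1 / 4) ^ p) (starWeights n) (1 : Matrix (Fin (n + 1)) (Fin (n + 1)) ℝ)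
      (levelVector n j) - 2 * (p.testBit j).toNat| ≤ 2 / 3 := by
  have hs : (0 : ℝ) < (1 / 4) ^ p := by positivity
  have hcenter : phi ((1 / 4) ^ p) 1 = 1 := phi_eq_one hs (pow_le_one₀ (by norm_num) (by norm_num))
  have key := abs_sum_mul_phi_pow_sub_le (q := 1 / 4) (by norm_num) (by norm_num)
    (fun k => (bitJump j k : ℝ)) (fun k => by exact_mod_cast abs_bitJump_le j k) hp
  rw [sum_range_bitJump] at key
  rw [slin_one, sum_sum_starWeights_mul]
  simp only [levelVector, Fin.cons_zero, Fin.cons_succ, hcenter,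
    phi_intCast_mul hs.le (abs_bitJump_le _ _)]
  rw [Fin.sum_univ_eq_sum_range (fun k => (bitJump j k : ℝ) * phi ((1 / 4) ^ p) ((1 / 4) ^ k))]
  calc _ = 2 * |∑ k ∈ range n, (bitJump j k : ℝ) * phi ((1 / 4) ^ p) ((1 / 4) ^ k)
        - (p.testBit j).toNat| := by rw [mul_one, ← mul_sub, abs_mul, abs_two]
    _ ≤ 2 / 3 := by norm_num at key ⊢; linarith

theorem stmt_4 :
    ∃ c : ℝ, 0 < c ∧ ∃ N : ℕ, ∀ n : ℕ, N ≤ n →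
      ∃ m : ℕ, c * Real.log n ≤ (m : ℝ) ∧
        ∃ (A : Fin n → Fin n → ℝ) (u : Fin n → Fin n → ℝ)
          (Z : Fin m → Fin n → ℝ) (r : Fin m → ℝ),
          (∀ i j, A i j = A j i) ∧ (∀ i j, 0 ≤ A i j) ∧ (∀ i, A i i = 0) ∧
          (∀ i, ∑ k, (u i k) ^ 2 = 1) ∧
          ∀ T : Finset (Fin m), ∃ s : ℝ, 0 < s ∧
            ∀ j : Fin m, (r j < slin n s A u (Z j) ↔ j ∈ T) := by
  refine ⟨1 / 2, by norm_num, 3, fun n hn => ?_⟩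
  obtain ⟨n, rfl⟩ : ∃ n', n = n' + 1 := ⟨n - 1, by omega⟩
  have hm : 2 ^ Nat.log 2 n ≤ n := Nat.pow_log_le_self 2 (by omega)
  refine ⟨Nat.log 2 n, ?_, starWeights n, (1 : Matrix (Fin (n + 1)) (Fin (n + 1)) ℝ),
    fun j => levelVector n j, 1, fun i j => ?_, fun i j => ?_, fun i => ?_, fun i => ?_,
    fun T => ?_⟩
  · push_cast
    linarith [log_succ_le_two_mul_natLog (show 2 ≤ n by omega)]
  · simp only [starWeights, ne_comm, or_comm]
  · unfold starWeights
    split_ifs <;> norm_num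
  · simp [starWeights]
  · simp [Matrix.one_apply]
  set p := ∑ i ∈ T.map Fin.valEmbedding, 2 ^ i
  have hp : p < n := (Nat.geomSum_lt le_rfl (by simp)).trans_le hm
  refine ⟨(1 / 4) ^ p, by positivity, fun j => ?_⟩
  have hbit : p.testBit j ↔ j ∈ T := (testBit_sum_two_pow _ _).trans (mem_map' _)
  have hslin := abs_le.mp (abs_slin_levelVector_sub_le hp j)
  rw [← hbit]
  cases hb : p.testBit j <;> rw [hb] at hslin <;> norm_num at hslin ⊢ <;> linarith
end

section
/- Let N ≥ 1, let b_1, …, b_N be pairwise distinct positive real numbers, and let a_1, …, a_N be real numbers, not all zero. Then the polynomial-exponential sum f(x) = Σ_{i=1}^N a_i · b_i^x has at most N real roots; that is, the set {x ∈ ℝ : Σ_{i=1}^N a_i · b_i^x = 0} is finite and has cardinality at most N. -/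
/-!
Multiplying by `b_j ^ (-x)` for some `j` does not move the zeros and turns the `j`-th base into
`1`, so that term becomes constant and differentiation removes it. What remains is again an
exponential sum, with one term fewer and coefficients `a_i log (b_i / b_j)`, which vanish only
where `a_i` does because the bases are distinct. Rolle's theorem bounds the zeros of a function
by those of its derivative plus one, so induction on the number of terms gives fewer than `N`
zeros.
-/

open Real Set

theorem encard_zeros_le_encard_zeros_deriv_add_one {f f' : ℝ → ℝ}
    (hf : ∀ x, HasDerivAt f (f' x) x) :
    {x | f x = 0}.encard ≤ {x | f' x = 0}.encard + 1 := by
  obtain hZ' | hZ' := {x | f' x = 0}.finite_or_infinite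
  swap
  · simp [hZ'.encard_eq]
  rw [hZ'.encard_eq_coe_toFinset_card]
  by_contra! hlt
  obtain ⟨t, htZ, htc⟩ := exists_subset_encard_eq (k := (hZ'.toFinset.card + 2 : ℕ))
    (by exact_mod_cast Order.add_one_le_of_lt hlt)
  lift t to Finset ℝ using finite_of_encard_eq_coe htc
  rw [encard_coe_eq_coe_finsetCard, Nat.cast_inj] at htc
  have : t.card ≤ hZ'.toFinset.card + 1 := by
    refine Finset.card_le_of_interleaved fun x hx y hy hxy _ => ?_
    obtain ⟨z, hz, hz0⟩ := exists_hasDerivAt_eq_zero hxy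
      (fun u _ => (hf u).continuousAt.continuousWithinAt) ((htZ hx).trans (htZ hy).symm)
      fun z _ => hf z
    exact ⟨z, hZ'.mem_toFinset.2 hz0, hz⟩
  omega

section ExpSum

variable {ι : Type*}

theorem hasDerivAt_sum_mul_rpow (s : Finset ι) (a b : ι → ℝ) (hb : ∀ i ∈ s, 0 < b i)
    (x : ℝ) :
    HasDerivAt (fun y => ∑ i ∈ s, a i * b i ^ y) (∑ i ∈ s, a i * log (b i) * b i ^ x) x := by
  refine HasDerivAt.fun_sum fun i hi => ?_
  have := ((hasStrictDerivAt_const_rpow (hb i hi) x).hasDerivAt).const_mul (a i)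
  rwa [mul_comm (b i ^ x), ← mul_assoc] at this

theorem setOf_sum_mul_div_rpow_eq_zero (s : Finset ι) (a b : ι → ℝ) (hb : ∀ i ∈ s, 0 < b i)
    {c : ℝ} (hc : 0 < c) :
    {x : ℝ | ∑ i ∈ s, a i * (b i / c) ^ x = 0} = {x : ℝ | ∑ i ∈ s, a i * b i ^ x = 0} := by
  ext x
  have : ∑ i ∈ s, a i * (b i / c) ^ x = (∑ i ∈ s, a i * b i ^ x) / c ^ x := by
    rw [Finset.sum_div]
    refine Finset.sum_congr rfl fun i hi => ?_
    rw [div_rpow (hb i hi).le hc.le, mul_div_assoc]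
  simp [this, (rpow_pos_of_pos hc x).ne']

theorem encard_setOf_sum_insert_mul_rpow_eq_zero_le [DecidableEq ι] {j : ι} {s : Finset ι}
    (hj : j ∉ s) (a c : ι → ℝ) (hc : ∀ i ∈ insert j s, 0 < c i) (hcj : c j = 1) :
    {x : ℝ | ∑ i ∈ insert j s, a i * c i ^ x = 0}.encard ≤
      {x : ℝ | ∑ i ∈ s, a i * log (c i) * c i ^ x = 0}.encard + 1 := by
  refine encard_zeros_le_encard_zeros_deriv_add_one fun x => ?_
  have := hasDerivAt_sum_mul_rpow _ a c hc x
  rwa [Finset.sum_insert hj, hcj, log_one, mul_zero, zero_mul, zero_add] at this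

theorem setOf_sum_mul_rpow_eq_zero_eq_empty_of_single [DecidableEq ι] {j : ι} {s : Finset ι}
    (hj : j ∉ s) (a b : ι → ℝ) (hbj : 0 < b j) (haj : a j ≠ 0) (hs : ∀ i ∈ s, a i = 0) :
    {x : ℝ | ∑ i ∈ insert j s, a i * b i ^ x = 0} = ∅ := by
  have hsum : ∀ x : ℝ, ∑ i ∈ insert j s, a i * b i ^ x = a j * b j ^ x := fun x => by
    rw [Finset.sum_insert hj, Finset.sum_eq_zero fun i hi => by rw [hs i hi, zero_mul], add_zero]
  simp [hsum, haj, (rpow_pos_of_pos hbj _).ne']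

theorem encard_setOf_sum_mul_rpow_eq_zero_lt (s : Finset ι) (a b : ι → ℝ)
    (hb : ∀ i ∈ s, 0 < b i) (hinj : InjOn b s) (ha : ∃ i ∈ s, a i ≠ 0) :
    {x : ℝ | ∑ i ∈ s, a i * b i ^ x = 0}.encard < s.card := by
  classical
  induction s using Finset.induction_on generalizing a b with
  | empty => simp at ha
  | insert j s hj ih =>
    have hbj := hb j (Finset.mem_insert_self j s)
    by_cases hs : ∀ i ∈ s, a i = 0
    · have haj : a j ≠ 0 := by
        obtain ⟨i, hi, hai⟩ := ha
        obtain rfl | hi := Finset.mem_insert.1 hi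
        exacts [hai, absurd (hs i hi) hai]
      simp [setOf_sum_mul_rpow_eq_zero_eq_empty_of_single hj a b hbj haj hs]
    push Not at hs
    obtain ⟨i, hi, hai⟩ := hs
    set c : ι → ℝ := fun i => b i / b j
    have hc : ∀ i ∈ insert j s, 0 < c i := fun i hi => div_pos (hb i hi) hbj
    have hcinj : InjOn c s := fun i hi k hk h =>
      hinj (Finset.mem_insert_of_mem hi) (Finset.mem_insert_of_mem hk)
        ((div_left_inj' hbj.ne').1 h)
    have hlog : ∀ i ∈ s, log (c i) ≠ 0 := by
      intro i hi
      refine log_ne_zero_of_pos_of_ne_one (hc i (Finset.mem_insert_of_mem hi)) ?_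
      rw [Ne, div_eq_one_iff_eq hbj.ne']
      intro h
      exact hj (hinj (Finset.mem_insert_of_mem hi) (Finset.mem_insert_self j s) h ▸ hi)
    have hderiv_zeros := ih (fun i => a i * log (c i)) c
      (fun i hi => hc i (Finset.mem_insert_of_mem hi)) hcinj ⟨i, hi, mul_ne_zero hai (hlog i hi)⟩
    rw [← setOf_sum_mul_div_rpow_eq_zero _ a b hb hbj, Finset.card_insert_of_notMem hj,
      Nat.cast_succ]
    calc _ ≤ _ := encard_setOf_sum_insert_mul_rpow_eq_zero_le hj a c hc (div_self hbj.ne')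
      _ < s.card + 1 := (ENat.add_lt_add_iff_right ENat.one_ne_top).2 hderiv_zeros

end ExpSum

theorem stmt_6_general (N : ℕ) (a b : Fin N → ℝ)
    (hb : ∀ i, 0 < b i) (hbinj : Function.Injective b) (ha : ∃ i, a i ≠ 0) :
    {x : ℝ | ∑ i, a i * (b i) ^ x = 0}.Finite ∧
      {x : ℝ | ∑ i, a i * (b i) ^ x = 0}.ncard ≤ N := by
  have h := encard_setOf_sum_mul_rpow_eq_zero_lt Finset.univ a b (fun i _ => hb i)
    hbinj.injOn (by simpa using ha)
  rw [Finset.card_univ, Fintype.card_fin] at h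
  exact encard_le_coe_iff_finite_ncard_le.1 h.le

theorem stmt_6 (N : ℕ) (hN : 1 ≤ N) (a b : Fin N → ℝ)
    (hb : ∀ i, 0 < b i) (hbinj : Function.Injective b) (ha : ∃ i, a i ≠ 0) :
    {x : ℝ | ∑ i, a i * (b i) ^ x = 0}.Finite ∧
      {x : ℝ | ∑ i, a i * (b i) ^ x = 0}.ncard ≤ N :=
  stmt_6_general N a b hb hbinj ha
end

section
/- Let N ≥ 1 and let c_1, …, c_N and e_1, …, e_N be positive real numbers such that the multiset {c_1, …, c_N} is not equal to the multiset {e_1, …, e_N}. Then the set {p ∈ ℝ : Σ_{i=1}^N c_i^p = Σ_{i=1}^N e_i^p} is finite and has at most 2N elements. (Consequently, for a cluster T of at most N points and two candidate centers v_1, v_2 ∈ T, the comparison Σ_{q∈T} d(q,v_1)^p versus Σ_{q∈T} d(q,v_2)^p changes outcome at most 2N times as the pruning-function exponent p ranges over ℝ, unless the two multisets of distances coincide.) -/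
/-!
Writing `c ^ p = exp (log c * p)`, the difference of the two sums is an exponential sum
`∑ a_λ exp (λ p)` over at most `2N` distinct frequencies `λ`, with a nonzero coefficient
because the multisets differ. An exponential sum with `k` frequencies has fewer than `k` real
zeros: dividing by `exp (λ₀ p)` keeps the zeros and makes the `λ₀`-term constant, so
differentiating leaves an exponential sum with `k - 1` frequencies, and Rolle's theorem puts
one of its zeros between any two consecutive zeros of the original.
-/

open Set Real

theorem Set.finite_and_ncard_le_of_interleaved {α : Type*} [LinearOrder α] {S T : Set α}
    (hT : T.Finite) (h : ∀ x ∈ S, ∀ y ∈ S, x < y → ∃ z ∈ T, x < z ∧ z < y) :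
    S.Finite ∧ S.ncard ≤ T.ncard + 1 := by
  have hcard : ∀ u : Finset α, ↑u ⊆ S → u.card ≤ T.ncard + 1 := fun u hu => by
    rw [T.ncard_eq_toFinset_card hT]
    exact Finset.card_le_of_interleaved fun x hx y hy hxy _ => by
      simpa using h x (hu hx) y (hu hy) hxy
  have hS : S.Finite := Set.not_infinite.mp fun hinf => by
    obtain ⟨u, hu, hcu⟩ := hinf.exists_subset_card_eq (T.ncard + 2)
    have := hcard u hu
    omega
  exact ⟨hS, S.ncard_eq_toFinset_card hS ▸ hcard hS.toFinset (by simp)⟩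

theorem finite_and_ncard_zeros_le_of_hasDerivAt {f f' : ℝ → ℝ}
    (hf : ∀ x, HasDerivAt f (f' x) x) (hf' : {x | f' x = 0}.Finite) :
    {x | f x = 0}.Finite ∧ {x | f x = 0}.ncard ≤ {x | f' x = 0}.ncard + 1 := by
  have hcont : Continuous f := continuous_iff_continuousAt.2 fun x => (hf x).continuousAt
  refine Set.finite_and_ncard_le_of_interleaved hf' fun x hx y hy hxy => ?_
  obtain ⟨z, ⟨hxz, hzy⟩, hz⟩ := exists_hasDerivAt_eq_zero hxy hcont.continuousOn
    (hx.trans hy.symm) fun t _ => hf t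
  exact ⟨z, hz, hxz, hzy⟩

section ExpSum

variable {ι : Type*}

noncomputable def expSum (s : Finset ι) (a μ : ι → ℝ) (x : ℝ) : ℝ :=
  ∑ i ∈ s, a i * exp (μ i * x)

theorem hasDerivAt_expSum (s : Finset ι) (a μ : ι → ℝ) (x : ℝ) :
    HasDerivAt (expSum s a μ) (expSum s (fun i => a i * μ i) μ x) x :=
  HasDerivAt.fun_sum fun i _ =>
    ((((hasDerivAt_id' x).const_mul (μ i)).exp).const_mul (a i)).congr_deriv (by ring)

theorem expSum_sub_const_eq_zero_iff (s : Finset ι) (a μ : ι → ℝ) (ν x : ℝ) :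
    expSum s a (fun i => μ i - ν) x = 0 ↔ expSum s a μ x = 0 := by
  have hdiv : expSum s a (fun i => μ i - ν) x = expSum s a μ x / exp (ν * x) := by
    simp only [expSum, Finset.sum_div, sub_mul, exp_sub, mul_div_assoc]
  simp [hdiv, exp_ne_zero]

theorem hasDerivAt_expSum_insert_sub_self [DecidableEq ι] {s : Finset ι} {i₀ : ι} (hi₀ : i₀ ∉ s)
    (a μ : ι → ℝ) (x : ℝ) :
    HasDerivAt (expSum (insert i₀ s) a fun i => μ i - μ i₀)
      (expSum s (fun i => a i * (μ i - μ i₀)) (fun i => μ i - μ i₀) x) x := by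
  convert hasDerivAt_expSum (insert i₀ s) a (fun i => μ i - μ i₀) x using 1
  simp [expSum, Finset.sum_insert hi₀]

theorem expSum_insert_of_forall_eq_zero [DecidableEq ι] {s : Finset ι} {a : ι → ℝ}
    (ha : ∀ i ∈ s, a i = 0) (i₀ : ι) (μ : ι → ℝ) (x : ℝ) :
    expSum (insert i₀ s) a μ x = a i₀ * exp (μ i₀ * x) := by
  rw [expSum, Finset.sum_eq_single_of_mem i₀ (Finset.mem_insert_self i₀ s)]
  intro i hi hne
  rw [ha i ((Finset.mem_insert.mp hi).resolve_left hne), zero_mul]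

theorem finite_and_ncard_lt_zeros_expSum {s : Finset ι} {a μ : ι → ℝ} (hμ : Set.InjOn μ s)
    (ha : ∃ i ∈ s, a i ≠ 0) :
    {x | expSum s a μ x = 0}.Finite ∧ {x | expSum s a μ x = 0}.ncard < s.card := by
  classical
  induction s using Finset.induction_on generalizing a μ with
  | empty => simp at ha
  | @insert i₀ s hi₀ ih =>
    rw [Finset.card_insert_of_notMem hi₀]
    by_cases hs : ∀ i ∈ s, a i = 0
    · have hai₀ : a i₀ ≠ 0 := by
        obtain ⟨i, hi, hai⟩ := ha
        rcases Finset.mem_insert.mp hi with rfl | hi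
        exacts [hai, absurd (hs i hi) hai]
      have hzeros : {x | expSum (insert i₀ s) a μ x = 0} = ∅ := by
        ext x
        simp [expSum_insert_of_forall_eq_zero hs, hai₀, exp_ne_zero]
      simp [hzeros]
    · obtain ⟨i, hi, hai⟩ := not_forall₂.mp hs
      have hμ' : Set.InjOn (fun i => μ i - μ i₀) s := fun i hi j hj hij =>
        hμ (Finset.mem_insert_of_mem hi) (Finset.mem_insert_of_mem hj) (sub_left_inj.mp hij)
      have hμi : μ i ≠ μ i₀ := fun h =>
        hi₀ (hμ (Finset.mem_insert_of_mem hi) (Finset.mem_insert_self i₀ s) h ▸ hi)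
      obtain ⟨hfin', hcard'⟩ := ih (a := fun i => a i * (μ i - μ i₀)) hμ'
        ⟨i, hi, mul_ne_zero hai (sub_ne_zero.mpr hμi)⟩
      obtain ⟨hfin, hcard⟩ :=
        finite_and_ncard_zeros_le_of_hasDerivAt (hasDerivAt_expSum_insert_sub_self hi₀ a μ) hfin'
      rw [Set.ext fun x => expSum_sub_const_eq_zero_iff _ a μ (μ i₀) x] at hfin hcard
      exact ⟨hfin, by omega⟩

end ExpSum

namespace Multiset

theorem sum_map_eq_sum_count_mul_of_subset {α : Type*} [DecidableEq α] {A : Multiset α}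
    {s : Finset α} (hs : A.toFinset ⊆ s) (f : α → ℝ) :
    (A.map f).sum = ∑ v ∈ s, (A.count v : ℝ) * f v := by
  rw [Finset.sum_multiset_map_count, Finset.sum_subset hs]
  · simp only [nsmul_eq_mul]
  · intro v _ hv
    simp [count_eq_zero_of_notMem fun h => hv (mem_toFinset.mpr h)]

theorem exists_count_ne_of_ne {α : Type*} [DecidableEq α] {A B : Multiset α} (h : A ≠ B) :
    ∃ v ∈ A.toFinset ∪ B.toFinset, A.count v ≠ B.count v := by
  obtain ⟨v, hv⟩ := not_forall.mp (mt Multiset.ext.mpr h)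
  refine ⟨v, ?_, hv⟩
  by_contra hvAB
  simp only [Finset.mem_union, mem_toFinset, not_or] at hvAB
  rw [count_eq_zero_of_notMem hvAB.1, count_eq_zero_of_notMem hvAB.2] at hv
  exact hv rfl

theorem finite_and_ncard_lt_setOf_sum_map_exp_eq {A B : Multiset ℝ} (h : A ≠ B) :
    {x | (A.map fun v => exp (v * x)).sum = (B.map fun v => exp (v * x)).sum}.Finite ∧
      {x | (A.map fun v => exp (v * x)).sum = (B.map fun v => exp (v * x)).sum}.ncard
        < (A.toFinset ∪ B.toFinset).card := by
  classical
  have hset : {x | (A.map fun v => exp (v * x)).sum = (B.map fun v => exp (v * x)).sum} =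
      {x | expSum (A.toFinset ∪ B.toFinset) (fun v => A.count v - B.count v) id x = 0} := by
    ext x
    simp only [expSum, id, sub_mul, Finset.sum_sub_distrib, sub_eq_zero,
      ← sum_map_eq_sum_count_mul_of_subset Finset.subset_union_left,
      ← sum_map_eq_sum_count_mul_of_subset Finset.subset_union_right]
  obtain ⟨v, hv, hAB⟩ := exists_count_ne_of_ne h
  rw [hset]
  exact finite_and_ncard_lt_zeros_expSum (injOn_id _) ⟨v, hv, sub_ne_zero.mpr (mod_cast hAB)⟩

end Multiset

theorem Finset.sum_rpow_eq_sum_map_exp_log {ι : Type*} {s : Finset ι} {f : ι → ℝ}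
    (hf : ∀ i ∈ s, 0 < f i) (p : ℝ) :
    ∑ i ∈ s, f i ^ p = ((s.val.map fun i => log (f i)).map fun v => exp (v * p)).sum := by
  rw [Multiset.map_map, Finset.sum_eq_multiset_sum]
  exact congrArg Multiset.sum (Multiset.map_congr rfl fun i hi => rpow_def_of_pos (hf i hi) p)

theorem stmt_8_general (N : ℕ) (c e : Fin N → ℝ)
    (hc : ∀ i, 0 < c i) (he : ∀ i, 0 < e i)
    (hne : Multiset.map c Finset.univ.val ≠ Multiset.map e Finset.univ.val) :
    {p : ℝ | ∑ i, (c i) ^ p = ∑ i, (e i) ^ p}.Finite ∧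
      {p : ℝ | ∑ i, (c i) ^ p = ∑ i, (e i) ^ p}.ncard ≤ 2 * N := by
  set A := Finset.univ.val.map fun i => log (c i)
  set B := Finset.univ.val.map fun i => log (e i)
  have hAB : A ≠ B := fun h => hne <| by
    simpa [A, B, Multiset.map_map, Function.comp_def, exp_log (hc _), exp_log (he _)] using
      congrArg (Multiset.map exp) h
  have hset : {p : ℝ | ∑ i, c i ^ p = ∑ i, e i ^ p} =
      {x | (A.map fun v => exp (v * x)).sum = (B.map fun v => exp (v * x)).sum} := by
    simp only [Finset.sum_rpow_eq_sum_map_exp_log fun i _ => hc i,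
      Finset.sum_rpow_eq_sum_map_exp_log fun i _ => he i, A, B]
  have hcard : (A.toFinset ∪ B.toFinset).card ≤ 2 * N := calc
    _ ≤ A.toFinset.card + B.toFinset.card := Finset.card_union_le _ _
    _ ≤ Multiset.card A + Multiset.card B := add_le_add A.toFinset_card_le B.toFinset_card_le
    _ = 2 * N := by simp [A, B, two_mul]
  obtain ⟨hfin, hlt⟩ := Multiset.finite_and_ncard_lt_setOf_sum_map_exp_eq hAB
  rw [hset]
  exact ⟨hfin, by omega⟩

theorem stmt_8 (N : ℕ) (hN : 1 ≤ N) (c e : Fin N → ℝ)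
    (hc : ∀ i, 0 < c i) (he : ∀ i, 0 < e i)
    (hne : Multiset.map c Finset.univ.val ≠ Multiset.map e Finset.univ.val) :
    {p : ℝ | ∑ i, (c i) ^ p = ∑ i, (e i) ^ p}.Finite ∧
      {p : ℝ | ∑ i, (c i) ^ p = ∑ i, (e i) ^ p}.ncard ≤ 2 * N :=
  stmt_8_general N c e hc he hne
end

section
/- There exists a universal constant C > 0 such that for every n ≥ 2 and m ≥ 1 the following holds. Suppose there are m triples (A^{(k)}, p^{(k)}, w^{(k)}) for k = 1, …, m, where each A^{(k)} is an n×n real matrix and p^{(k)}, w^{(k)} ∈ ℝ^n, together with witnesses r_1, …, r_m ∈ ℝ, such that for every subset T ⊆ {1, …, m} there exists γ_T ∈ [0, π/2] with owr_{γ_T}(A^{(k)}, p^{(k)}, w^{(k)}) > r_k if and only if k ∈ T. Then m ≤ C · log n. (That is, the pseudo-dimension of the class of outward-rotation rounding algorithms {owr_γ : γ ∈ [0, π/2]} on size-n instances is O(log n).) -/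
/-
Each value `owr_γ` depends on `γ` only through the sign pattern of the `m n` numbers
`p_i cos γ + w_i sin γ`, so shattering forces the angles `γ_T` to realise `2^m` distinct patterns.
By the identity `sin (z - y) f x + sin (y - x) f z = sin (z - x) f y`, each `f = a cos + b sin`
changes sign at most once on `[0, π/2]`; hence, as `γ` increases, the set of coordinates whose
sign has flipped only grows, and at most `m n + 1` patterns occur. Then `2^m ≤ m n + 1` gives
`m ≤ 12 log n`.
-/

/-- `sgn x = 1` if `0 ≤ x`, and `-1` otherwise. -/
noncomputable def sgn (x : ℝ) : ℝ := if 0 ≤ x then 1 else -1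

/-- The value of the `γ`-outward-rotation rounding:
`owr_γ(A,p,w) = Σ_{i,j} A i j · sgn(p_i cos γ + w_i sin γ) · sgn(p_j cos γ + w_j sin γ)`. -/
noncomputable def owr (n : ℕ) (γ : ℝ) (A : Fin n → Fin n → ℝ) (p w : Fin n → ℝ) : ℝ :=
  ∑ i, ∑ j, A i j * sgn (p i * Real.cos γ + w i * Real.sin γ) *
    sgn (p j * Real.cos γ + w j * Real.sin γ)

open Finset Real
open scoped symmDiff

section SignPatterns

variable {X ι : Type*} [LinearOrder X] [Fintype ι] [DecidableEq ι]

theorem card_image_le_of_changes_at_most_once (S : Finset X) (pat : X → Finset ι)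
    (hpat : ∀ c, ∀ x ∈ S, ∀ y ∈ S, ∀ z ∈ S, x ≤ y → y ≤ z →
      (c ∈ pat x ↔ c ∈ pat z) → (c ∈ pat y ↔ c ∈ pat x)) :
    #(S.image pat) ≤ Fintype.card ι + 1 := by
  rcases S.eq_empty_or_nonempty with rfl | hS
  · simp
  set x₀ := S.min' hS
  -- the coordinates that have changed since `x₀` only accumulate
  have changed_mono : ∀ x ∈ S, ∀ y ∈ S, x ≤ y → pat x ∆ pat x₀ ⊆ pat y ∆ pat x₀ := by
    intro x hx y hy hxy c
    have := hpat c x₀ (S.min'_mem hS) x hx y hy (S.min'_le x hx) hxy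
    simp only [Finset.mem_symmDiff]
    tauto
  have hinj : Set.InjOn (fun P => #(P ∆ pat x₀)) (S.image pat) := by
    simp only [Set.InjOn, coe_image, Set.mem_image, mem_coe, forall_exists_index, and_imp]
    rintro _ x hx rfl _ y hy rfl hcard
    apply symmDiff_left_injective (pat x₀)
    rcases le_total x y with hxy | hyx
    · exact eq_of_subset_of_card_le (changed_mono x hx y hy hxy) hcard.ge
    · exact (eq_of_subset_of_card_le (changed_mono y hy x hx hyx) hcard.le).symm
  calc #(S.image pat) ≤ #(range (Fintype.card ι + 1)) :=
        card_le_card_of_injOn _ (fun P _ => by simpa [Nat.lt_succ_iff] using card_le_univ _) hinj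
    _ = Fintype.card ι + 1 := card_range _

end SignPatterns

theorem sin_sub_mul_add_sin_sub_mul (a b x y z : ℝ) :
    sin (z - y) * (a * cos x + b * sin x) + sin (y - x) * (a * cos z + b * sin z) =
      sin (z - x) * (a * cos y + b * sin y) := by
  simp only [sin_sub]
  ring

theorem sign_changes_at_most_once_of_sub_lt_pi (a b : ℝ) {x y z : ℝ} (hxy : x ≤ y) (hyz : y ≤ z)
    (hzx : z - x < π) (h : 0 ≤ a * cos x + b * sin x ↔ 0 ≤ a * cos z + b * sin z) :
    (0 ≤ a * cos y + b * sin y ↔ 0 ≤ a * cos x + b * sin x) := by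
  rcases hxy.eq_or_lt with rfl | hxy
  · rfl
  rcases hyz.eq_or_lt with rfl | hyz
  · exact h.symm
  have hzy : 0 < sin (z - y) := sin_pos_of_pos_of_lt_pi (by linarith) (by linarith)
  have hyx : 0 < sin (y - x) := sin_pos_of_pos_of_lt_pi (by linarith) (by linarith)
  have hzx : 0 < sin (z - x) := sin_pos_of_pos_of_lt_pi (by linarith) hzx
  have key := sin_sub_mul_add_sin_sub_mul a b x y z
  by_cases hx : 0 ≤ a * cos x + b * sin x
  · have hz := h.mp hx
    simp only [hx, iff_true]
    nlinarith [mul_nonneg hzy.le hx, mul_nonneg hyx.le hz]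
  · have hz := not_le.mp (mt h.mpr hx)
    rw [not_le] at hx
    simp only [not_le.mpr hx, iff_false, not_le]
    nlinarith [mul_neg_of_pos_of_neg hzy hx, mul_neg_of_pos_of_neg hyx hz]

theorem card_sign_patterns_le {ι : Type*} [Fintype ι] [DecidableEq ι] (a b : ι → ℝ)
    (S : Finset ℝ) (hS : ∀ γ ∈ S, γ ∈ Set.Icc 0 (π / 2)) :
    #(S.image fun γ => ({c | 0 ≤ a c * cos γ + b c * sin γ} : Finset ι)) ≤ Fintype.card ι + 1 := by
  refine card_image_le_of_changes_at_most_once S _ fun c x hx y hy z hz hxy hyz => ?_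
  simp only [mem_filter, mem_univ, true_and]
  exact sign_changes_at_most_once_of_sub_lt_pi (a c) (b c) hxy hyz
    (by linarith [(hS x hx).1, (hS z hz).2, pi_pos])

theorem sgn_congr {x y : ℝ} (h : 0 ≤ x ↔ 0 ≤ y) : sgn x = sgn y := by
  simp only [sgn, h]

theorem owr_congr {n : ℕ} {γ γ' : ℝ} (A : Fin n → Fin n → ℝ) (p w : Fin n → ℝ)
    (h : ∀ i, 0 ≤ p i * cos γ + w i * sin γ ↔ 0 ≤ p i * cos γ' + w i * sin γ') :
    owr n γ A p w = owr n γ' A p w := by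
  simp only [owr, sgn_congr (h _)]

theorem le_mul_log_of_two_pow_le {m n : ℕ} (hn : 2 ≤ n) (h : 2 ^ m ≤ m * n + 1) :
    (m : ℝ) ≤ 12 * log n := by
  have hlog2 := log_two_gt_d9
  have hlogn : log 2 ≤ log n := log_le_log (by norm_num) (by exact_mod_cast hn)
  have hpow : (2 : ℝ) ^ m ≤ (m + 1) * n := by
    exact_mod_cast h.trans (by rw [add_mul, one_mul]; omega)
  have hlog : m * log 2 ≤ log (m + 1) + log n := by
    rw [← log_pow, ← log_mul (by positivity) (by positivity)]
    exact log_le_log (by positivity) hpow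
  -- `log (m + 1) ≤ (m + 1) / 4 - 1 + log 4`, whose slope `1 / 4` is below `log 2`
  have hlogm : log ((m + 1) / 4) ≤ (m + 1) / 4 - 1 := log_le_sub_one_of_pos (by positivity)
  rw [log_div (by positivity) (by norm_num), show (4 : ℝ) = 2 ^ 2 by norm_num, log_pow] at hlogm
  nlinarith [mul_le_mul_of_nonneg_left hlog2.le (Nat.cast_nonneg m : (0 : ℝ) ≤ m)]

theorem stmt_10 :
    ∃ C : ℝ, 0 < C ∧
      ∀ (n m : ℕ), 2 ≤ n → 1 ≤ m →
      ∀ (A : Fin m → Fin n → Fin n → ℝ) (p w : Fin m → Fin n → ℝ) (r : Fin m → ℝ),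
        (∀ T : Finset (Fin m), ∃ γ ∈ Set.Icc (0 : ℝ) (Real.pi / 2),
          ∀ k : Fin m, (r k < owr n γ (A k) (p k) (w k) ↔ k ∈ T)) →
        (m : ℝ) ≤ C * Real.log n := by
  refine ⟨12, by norm_num, fun n m hn _ A p w r hshatter => le_mul_log_of_two_pow_le hn ?_⟩
  choose γ hγ hγT using hshatter
  let pat : ℝ → Finset (Fin m × Fin n) := fun t => {c | 0 ≤ p c.1 c.2 * cos t + w c.1 c.2 * sin t}
  -- `owr` only sees the sign pattern, and the shattered sets `T` are told apart by `owr`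
  have hinj : Function.Injective (pat ∘ γ) := by
    intro T T' hTT'
    ext k
    have hsigns : ∀ i, 0 ≤ p k i * cos (γ T) + w k i * sin (γ T) ↔
        0 ≤ p k i * cos (γ T') + w k i * sin (γ T') := fun i => by
      simpa [pat] using congrArg (fun P => (k, i) ∈ P) hTT'
    rw [← hγT T k, ← hγT T' k, owr_congr (A k) (p k) (w k) hsigns]
  calc 2 ^ m = #(univ.image (pat ∘ γ)) := by
        rw [card_image_of_injective _ hinj, card_univ, Fintype.card_finset, Fintype.card_fin]
    _ = #((univ.image γ).image pat) := by rw [image_image]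
    _ ≤ Fintype.card (Fin m × Fin n) + 1 :=
        card_sign_patterns_le (fun c : Fin m × Fin n => p c.1 c.2) (fun c => w c.1 c.2) _
          (forall_mem_image.mpr fun T _ => hγ T)
    _ = m * n + 1 := by simp
end

section
/- There exists a universal constant C > 0 such that for every n ≥ 2 and m ≥ 1 the following holds. Suppose there are m triples (A^{(k)}, y^{(k)}, q^{(k)}) for k = 1, …, m, where each A^{(k)} is an n×n real matrix and y^{(k)}, q^{(k)} ∈ ℝ^n, together with witnesses r_1, …, r_m ∈ ℝ, such that for every subset T ⊆ {1, …, m} there exists s_T > 0 with rprt_{s_T}(A^{(k)}, y^{(k)}, q^{(k)}) > r_k if and only if k ∈ T. Then m ≤ C · log n. (That is, the pseudo-dimension of the class of Randomized Projection Randomized Thresholding algorithms {rprt_s : s > 0} on size-n instances is O(log n).) -/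
/-- The value of the Randomized Projection Randomized Thresholding assignment:
`rprt_s(A,y,q) = Σ_{i,j} A i j · sgn(q_i − s·y_i) · sgn(q_j − s·y_j)`. -/
noncomputable def rprt (n : ℕ) (s : ℝ) (A : Fin n → Fin n → ℝ) (y q : Fin n → ℝ) : ℝ :=
  ∑ i, ∑ j, A i j * sgn (q i - s * y i) * sgn (q j - s * y j)

/-!
Each sign `sgn (q k i - s * y k i)` changes at most once as `s` increases, so along the real line the
full sign vector of the `m * n` coordinates takes at most `m * n + 1` values, and `rprt_s` on every
sample depends on `s` only through that vector. Shattering `m` samples needs `2 ^ m` distinct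
vectors, so `2 ^ m ≤ m * n + 1`, which forces `2 ^ m ≤ n ^ 5`, i.e. `m ≤ 5 log n / log 2`.
-/

open Finset

variable {ι : Type*} [Fintype ι]

lemma card_range_le_of_monotone {α : Type*} [LinearOrder α] {g : α → Finset ι} (hg : Monotone g) :
    Nat.card (Set.range g) ≤ Fintype.card ι + 1 := by
  let cardOf : Set.range g → Fin (Fintype.card ι + 1) :=
    fun v => ⟨#v.1, Nat.lt_succ_of_le (card_le_univ _)⟩
  have hinj : Function.Injective cardOf := by
    rintro ⟨_, s, rfl⟩ ⟨_, t, rfl⟩ hcard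
    simp only [cardOf, Fin.mk.injEq] at hcard
    rcases le_total s t with hst | hts
    · exact Subtype.ext (eq_of_subset_of_card_le (hg hst) hcard.ge)
    · exact Subtype.ext (eq_of_subset_of_card_le (hg hts) hcard.le).symm
  simpa using Nat.card_le_card_of_injective cardOf hinj

lemma two_pow_le_card_add_one_of_shatters {α : Type*} [LinearOrder α] {m : ℕ}
    {P : α → Finset ι} (hP : Monotone P) (g : α → Fin m → ℝ)
    (hg : ∀ s t, P s = P t → g s = g t) (r : Fin m → ℝ)
    (hshat : ∀ T : Finset (Fin m), ∃ s, ∀ k, r k < g s k ↔ k ∈ T) :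
    2 ^ m ≤ Fintype.card ι + 1 := by
  choose s hs using hshat
  have hinj : Function.Injective fun T => (⟨P (s T), T, rfl⟩ : Set.range (P ∘ s)) := by
    intro T T' hTT'
    ext k
    rw [← hs T k, ← hs T' k, hg _ _ (congrArg Subtype.val hTT')]
  calc 2 ^ m = Nat.card (Finset (Fin m)) := by simp
    _ ≤ Nat.card (Set.range (P ∘ s)) := Nat.card_le_card_of_injective _ hinj
    _ ≤ Nat.card (Set.range P) :=
      Nat.card_mono (Set.toFinite _) (Set.range_comp_subset_range _ _)
    _ ≤ Fintype.card ι + 1 := card_range_le_of_monotone hP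

/-- Membership records whether `q d - s * y d ≥ 0`, XOR-ed with the sign of `y d` so that it
becomes monotone in `s`. -/
noncomputable def signFlipSet (y q : ι → ℝ) (s : ℝ) : Finset ι :=
  {d | 0 ≤ q d - s * y d ↔ y d < 0}

lemma monotone_signFlipSet (y q : ι → ℝ) : Monotone (signFlipSet y q) := by
  intro s t hst
  simp only [signFlipSet, subset_iff, mem_filter, mem_univ, true_and]
  intro d hd
  rcases lt_or_ge (y d) 0 with hy | hy
  · have : 0 ≤ q d - s * y d := hd.mpr hy
    exact iff_of_true (by nlinarith) hy
  · have : q d - s * y d < 0 := not_le.mp fun h => hy.not_gt (hd.mp h)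
    exact iff_of_false (by nlinarith) hy.not_gt

lemma nonneg_iff_of_signFlipSet_eq {y q : ι → ℝ} {s t : ℝ}
    (h : signFlipSet y q s = signFlipSet y q t) (d : ι) :
    0 ≤ q d - s * y d ↔ 0 ≤ q d - t * y d := by
  have hd := congrArg (d ∈ ·) h
  simp only [signFlipSet, mem_filter, mem_univ, true_and, eq_iff_iff] at hd
  tauto

lemma rprt_congr_of_nonneg_iff {n : ℕ} {s t : ℝ} (A : Fin n → Fin n → ℝ) {y q : Fin n → ℝ}
    (h : ∀ i, 0 ≤ q i - s * y i ↔ 0 ≤ q i - t * y i) : rprt n s A y q = rprt n t A y q := by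
  simp only [rprt, sgn, h]

lemma sq_le_two_pow_succ (k : ℕ) : k ^ 2 ≤ 2 ^ (k + 1) := by
  induction k with
  | zero => norm_num
  | succ k ih =>
    rcases le_or_gt k 2 with hk | hk
    · interval_cases k <;> norm_num
    · rw [pow_succ 2 (k + 1)]; nlinarith

lemma two_pow_le_pow_five {m n : ℕ} (hn : 2 ≤ n) (h : 2 ^ m ≤ m * n + 1) : 2 ^ m ≤ n ^ 5 := by
  rcases Nat.eq_zero_or_pos m with rfl | hm
  · exact Nat.one_le_pow _ _ (by omega)
  have h2mn : 2 ^ m ≤ 2 * (m * n) := by nlinarith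
  have hsq : 2 ^ m * 2 ^ m ≤ 2 ^ m * (8 * n ^ 2) := by
    calc 2 ^ m * 2 ^ m ≤ (2 * (m * n)) ^ 2 := by rw [← sq]; exact Nat.pow_le_pow_left h2mn 2
      _ = 4 * m ^ 2 * n ^ 2 := by ring
      _ ≤ 4 * 2 ^ (m + 1) * n ^ 2 :=
        Nat.mul_le_mul_right _ (Nat.mul_le_mul_left _ (sq_le_two_pow_succ m))
      _ = 2 ^ m * (8 * n ^ 2) := by ring
  calc 2 ^ m ≤ 8 * n ^ 2 := Nat.le_of_mul_le_mul_left hsq (by positivity)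
    _ ≤ n ^ 5 := by nlinarith [pow_le_pow_left₀ (by norm_num : 0 ≤ 2) hn 3]

theorem stmt_12 :
    ∃ C : ℝ, 0 < C ∧
      ∀ (n m : ℕ), 2 ≤ n → 1 ≤ m →
      ∀ (A : Fin m → Fin n → Fin n → ℝ) (y q : Fin m → Fin n → ℝ) (r : Fin m → ℝ),
        (∀ T : Finset (Fin m), ∃ s : ℝ, 0 < s ∧
          ∀ k : Fin m, (r k < rprt n s (A k) (y k) (q k) ↔ k ∈ T)) →
        (m : ℝ) ≤ C * Real.log n := by
  refine ⟨5 / Real.log 2, by positivity, fun n m hn _ A y q r hshat => ?_⟩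
  have hcount : 2 ^ m ≤ m * n + 1 := by
    have := two_pow_le_card_add_one_of_shatters
      (monotone_signFlipSet (Function.uncurry y) (Function.uncurry q))
      (fun s k => rprt n s (A k) (y k) (q k))
      (fun s t hst => funext fun k =>
        rprt_congr_of_nonneg_iff (A k) fun i => nonneg_iff_of_signFlipSet_eq hst (k, i))
      r fun T => (hshat T).imp fun _ => And.right
    simpa using this
  have hpow : (2 : ℝ) ^ m ≤ (n : ℝ) ^ 5 := by exact_mod_cast two_pow_le_pow_five hn hcount
  have hlog := Real.log_le_log (by positivity) hpow
  rw [Real.log_pow, Real.log_pow] at hlog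
  push_cast at hlog
  rw [div_mul_eq_mul_div, le_div_iff₀ (Real.log_pos one_lt_two)]
  linarith
end

section
/- There exists a constant c > 0 such that for every sufficiently large n there exist a natural number m with m ≥ c · log n, an n×n real symmetric matrix A with nonnegative entries and zero diagonal, vectors y^{(1)}, …, y^{(m)} ∈ ℝ^n and q^{(1)}, …, q^{(m)} ∈ ℝ^n, and witnesses r_1, …, r_m ∈ ℝ, such that for every subset T ⊆ {1, …, m} there exists s_T > 0 with rprt_{s_T}(A, y^{(j)}, q^{(j)}) > r_j if and only if j ∈ T. (That is, the pseudo-dimension of the class of Randomized Projection Randomized Thresholding algorithms {rprt_s : s > 0} on size-n instances is Ω(log n).) -/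
/-!
Let `A` be the unit-weight clique on the vertices `0, …, C - 1`, `C = 2 ^ m ≤ n`; since
every spin squares to one, `rprt_s = (∑ σ_k) ^ 2 - C`. In sample `e` vertex `k` gets
`y_k = (-1) ^ (k + 1)` and `q_k = (k + 1) 2 ^ e y_k`, so its spin flips at
`s = (k + 1) 2 ^ e`, alternately upward and downward. At `s = t + 1/2` exactly the vertices
`k < ⌊t / 2 ^ e⌋` have flipped, so `∑ σ_k` is `2` or `0` according as `⌊t / 2 ^ e⌋` is odd or
even: sample `e` reads off bit `e` of `t`. Hence `s_T = ∑_{j ∈ T} 2 ^ j + 1/2` realises `T`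
against the witnesses `2 - C`, and `m = ⌊log₂ n⌋ ≥ log n / (2 log 2)`.
-/

open Finset

lemma sgn_mul_self (x : ℝ) : sgn x * sgn x = 1 := by
  unfold sgn; split_ifs <;> norm_num

lemma sgn_neg_one_pow_mul (k : ℕ) {x : ℝ} (hx : x ≠ 0) :
    sgn ((-1) ^ k * x) = (-1) ^ k * sgn x := by
  rcases neg_one_pow_eq_or ℝ k with h | h <;> rw [h] <;> rcases hx.lt_or_gt with hx | hx <;>
    simp [sgn, hx.le, hx.not_ge]

lemma natCast_sub_add_half_ne_zero (a t : ℕ) : (a : ℝ) - (t + 1 / 2) ≠ 0 := by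
  rcases lt_or_ge t a with h | h
  · have : (t : ℝ) + 1 ≤ a := by exact_mod_cast h
    linarith
  · have : (a : ℝ) ≤ t := by exact_mod_cast h
    linarith

lemma sgn_natCast_sub_add_half (a t : ℕ) :
    sgn ((a : ℝ) - (t + 1 / 2)) = if t < a then 1 else -1 := by
  rcases lt_or_ge t a with h | h
  · have : (t : ℝ) + 1 ≤ a := by exact_mod_cast h
    rw [if_pos h, sgn, if_pos (by linarith)]
  · have : (a : ℝ) ≤ t := by exact_mod_cast h
    rw [if_neg h.not_gt, sgn, if_neg (by linarith)]

section Clique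

variable {n : ℕ}

def cliqueWeights (S : Finset (Fin n)) (i j : Fin n) : ℝ :=
  if (i, j) ∈ S.offDiag then 1 else 0

lemma cliqueWeights_comm (S : Finset (Fin n)) (i j : Fin n) :
    cliqueWeights S i j = cliqueWeights S j i := by
  simp only [cliqueWeights, mem_offDiag, ne_comm (a := i), and_left_comm]

lemma cliqueWeights_nonneg (S : Finset (Fin n)) (i j : Fin n) : 0 ≤ cliqueWeights S i j := by
  unfold cliqueWeights; split_ifs <;> norm_num

lemma cliqueWeights_self (S : Finset (Fin n)) (i : Fin n) : cliqueWeights S i i = 0 := by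
  simp [cliqueWeights]

lemma sum_offDiag_mul {ι : Type*} [DecidableEq ι] (S : Finset ι) (σ : ι → ℝ) :
    ∑ p ∈ S.offDiag, σ p.1 * σ p.2 = (∑ i ∈ S, σ i) ^ 2 - ∑ i ∈ S, σ i ^ 2 := by
  have hprod : ∑ p ∈ S ×ˢ S, σ p.1 * σ p.2 = (∑ i ∈ S, σ i) ^ 2 := by
    rw [sq, sum_mul_sum, sum_product]
  have hdiag : ∑ p ∈ S.diag, σ p.1 * σ p.2 = ∑ i ∈ S, σ i ^ 2 := by
    rw [diag, sum_map]; simp [sq]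
  rw [← hprod, ← hdiag, ← diag_union_offDiag, sum_union (disjoint_diag_offDiag S)]
  ring

lemma rprt_cliqueWeights (S : Finset (Fin n)) (s : ℝ) (y q : Fin n → ℝ) :
    rprt n s (cliqueWeights S) y q = (∑ i ∈ S, sgn (q i - s * y i)) ^ 2 - #S := by
  set σ := fun i => sgn (q i - s * y i)
  calc rprt n s (cliqueWeights S) y q
      = ∑ p : Fin n × Fin n, cliqueWeights S p.1 p.2 * σ p.1 * σ p.2 :=
        (Fintype.sum_prod_type' _).symm
    _ = ∑ p ∈ S.offDiag, σ p.1 * σ p.2 := by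
        simp only [cliqueWeights, ite_mul, one_mul, zero_mul]
        rw [sum_ite_mem, univ_inter]
    _ = (∑ i ∈ S, σ i) ^ 2 - #S := by
        rw [sum_offDiag_mul]
        simp [σ, sq, sgn_mul_self]

end Clique

lemma sum_range_neg_one_pow (u : ℕ) :
    ∑ k ∈ range u, (-1 : ℝ) ^ k = if Even u then 0 else 1 := by
  rw [← Fin.sum_univ_eq_sum_range, Fin.sum_neg_one_pow]

lemma sum_range_neg_one_pow_mul_ite {u C : ℕ} (huC : u ≤ C) (hC : Even C) :
    ∑ k ∈ range C, (-1 : ℝ) ^ k * (if k < u then 1 else -1) = if Odd u then 2 else 0 := by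
  have hlow : ∑ k ∈ range u, (-1 : ℝ) ^ k * (if k < u then 1 else -1)
      = ∑ k ∈ range u, (-1 : ℝ) ^ k :=
    sum_congr rfl fun k hk => by simp [mem_range.mp hk]
  have hhigh : ∑ k ∈ Ico u C, (-1 : ℝ) ^ k * (if k < u then 1 else -1)
      = -∑ k ∈ Ico u C, (-1 : ℝ) ^ k := by
    rw [← sum_neg_distrib]
    exact sum_congr rfl fun k hk => by simp [(mem_Ico.mp hk).1]
  have hIco : ∑ k ∈ Ico u C, (-1 : ℝ) ^ k = -∑ k ∈ range u, (-1 : ℝ) ^ k := by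
    have hsplit := sum_range_add_sum_Ico (fun k => (-1 : ℝ) ^ k) huC
    rw [sum_range_neg_one_pow C, if_pos hC] at hsplit
    linarith
  rw [← sum_range_add_sum_Ico _ huC, hlow, hhigh, hIco, neg_neg, sum_range_neg_one_pow]
  by_cases h : Even u <;> simp [h, ← Nat.not_even_iff_odd]; norm_num

def alternatingSign (k : ℕ) : ℝ := (-1) ^ (k + 1)

def dyadicThreshold (e k : ℕ) : ℝ := ((k + 1) * 2 ^ e : ℕ) * alternatingSign k

lemma sgn_dyadicThreshold_sub (e k t : ℕ) :
    sgn (dyadicThreshold e k - (t + 1 / 2) * alternatingSign k)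
      = (-1) ^ k * (if k < t / 2 ^ e then 1 else -1) := by
  have hk : k < t / 2 ^ e ↔ ¬ t < (k + 1) * 2 ^ e := by
    rw [not_lt, ← Nat.le_div_iff_mul_le (by positivity), Nat.succ_le_iff]
  rw [dyadicThreshold, alternatingSign, ← mul_sub_right_distrib, mul_comm,
    sgn_neg_one_pow_mul _ (natCast_sub_add_half_ne_zero _ _), sgn_natCast_sub_add_half,
    pow_succ]
  split_ifs <;> simp_all

lemma sum_sgn_dyadicThreshold_sub {C t : ℕ} (e : ℕ) (hC : Even C) (ht : t < C) :
    ∑ k ∈ range C, sgn (dyadicThreshold e k - (t + 1 / 2) * alternatingSign k)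
      = if Odd (t / 2 ^ e) then 2 else 0 := by
  simp only [sgn_dyadicThreshold_sub]
  exact sum_range_neg_one_pow_mul_ite ((Nat.div_le_self _ _).trans ht.le) hC

lemma rprt_cliqueWeights_dyadicThreshold {n C : ℕ} (hCn : C ≤ n) (hC : Even C) {t : ℕ}
    (ht : t < C) (e : ℕ) :
    rprt n (t + 1 / 2) (cliqueWeights (univ.map (Fin.castLEEmb hCn)))
        (fun i => alternatingSign i) (fun i => dyadicThreshold e i)
      = (if Odd (t / 2 ^ e) then 4 else 0) - C := by
  rw [rprt_cliqueWeights, sum_map, card_map, card_univ, Fintype.card_fin]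
  simp only [Fin.castLEEmb_apply, Fin.val_castLE]
  rw [Fin.sum_univ_eq_sum_range
      (fun k => sgn (dyadicThreshold e k - (t + 1 / 2) * alternatingSign k)) C,
    sum_sgn_dyadicThreshold_sub e hC ht]
  split_ifs <;> norm_num

lemma odd_sum_two_pow_div_two_pow_iff (s : Finset ℕ) (i : ℕ) :
    Odd ((∑ k ∈ s, 2 ^ k) / 2 ^ i) ↔ i ∈ s := by
  conv_rhs => rw [← toFinset_bitIndices_sum_two_pow s]
  rw [List.mem_toFinset, Nat.mem_bitIndices, Nat.testBit_eq_decide_div_mod_eq, decide_eq_true_iff,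
    Nat.odd_iff]

lemma log_le_two_mul_log_two_mul_natLog {n : ℕ} (hn : 2 ≤ n) :
    Real.log n ≤ 2 * Real.log 2 * Nat.log 2 n := by
  have hlogb : Real.logb 2 n < Nat.log 2 n + 1 := by
    rw [← Real.natFloor_logb_natCast]
    exact Nat.lt_floor_add_one _
  have hm : (1 : ℝ) ≤ Nat.log 2 n := by exact_mod_cast Nat.log_pos one_lt_two hn
  have hlog2 : 0 < Real.log 2 := Real.log_pos one_lt_two
  rw [Real.logb, div_lt_iff₀ hlog2] at hlogb
  nlinarith

theorem stmt_13 :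
    ∃ c : ℝ, 0 < c ∧ ∃ N : ℕ, ∀ n : ℕ, N ≤ n →
      ∃ m : ℕ, c * Real.log n ≤ (m : ℝ) ∧
        ∃ (A : Fin n → Fin n → ℝ) (y q : Fin m → Fin n → ℝ) (r : Fin m → ℝ),
          (∀ i j, A i j = A j i) ∧ (∀ i j, 0 ≤ A i j) ∧ (∀ i, A i i = 0) ∧
          ∀ T : Finset (Fin m), ∃ s : ℝ, 0 < s ∧
            ∀ j : Fin m, (r j < rprt n s A (y j) (q j) ↔ j ∈ T) := by
  have hlog2 : 0 < Real.log 2 := Real.log_pos one_lt_two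
  refine ⟨1 / (2 * Real.log 2), by positivity, 2, fun n hn => ⟨Nat.log 2 n, ?_, ?_⟩⟩
  · rw [div_mul_eq_mul_div, one_mul, div_le_iff₀ (by positivity), mul_comm]
    exact log_le_two_mul_log_two_mul_natLog hn
  set m := Nat.log 2 n
  have hCn : 2 ^ m ≤ n := Nat.pow_log_le_self 2 (by omega)
  have hC : Even (2 ^ m) := (Nat.even_pow' (Nat.log_pos one_lt_two hn).ne').mpr even_two
  refine ⟨cliqueWeights (univ.map (Fin.castLEEmb hCn)), fun _ i => alternatingSign i,
    fun j i => dyadicThreshold j i, fun _ => 2 - 2 ^ m, cliqueWeights_comm _,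
    cliqueWeights_nonneg _, cliqueWeights_self _, fun T => ?_⟩
  set t := ∑ k ∈ T.map Fin.valEmbedding, 2 ^ k
  have ht : t < 2 ^ m := Nat.geomSum_lt le_rfl (by simp)
  refine ⟨t + 1 / 2, by positivity, fun j => ?_⟩
  simp only [rprt_cliqueWeights_dyadicThreshold hCn hC ht, t, odd_sum_two_pow_div_two_pow_iff,
    mem_map, Fin.valEmbedding_apply, Fin.val_inj, exists_eq_right]
  by_cases hj : j ∈ T <;> simp [hj]; norm_num
end

section
/- Let m ≥ 1 and B ≥ 0 be natural numbers, let f_1, …, f_m : ℝ → ℝ be functions, and let r_1, …, r_m ∈ ℝ. Suppose that for each k ∈ {1, …, m} there is a finite set P_k ⊆ ℝ with |P_k| ≤ B such that for all real s ≤ t, if the closed interval [s, t] contains no point of P_k then (f_k(s) > r_k if and only if f_k(t) > r_k). Then the number of distinct Boolean vectors of the form (1{f_1(s) > r_1}, …, 1{f_m(s) > r_m}) as s ranges over ℝ is at most 2mB + 1. In particular, if for every subset T ⊆ {1, …, m} there exists s_T ∈ ℝ with f_k(s_T) > r_k if and only if k ∈ T (i.e., the samples are shattered with witnesses r_1, …,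 r_m), then 2^m ≤ 2mB + 1. -/
/-!
Merge the breakpoints of all samples into one finite set `Q` with `#Q ≤ m * B`. The labelling
`s ↦ (r k < f k s)ₖ` is constant on every interval `[s, t]` that misses `Q`, hence factors
through the cell of `s` in the partition of `ℝ` cut out by `Q`, and there are only `2 * #Q + 1`
cells. Shattering the samples requires all `2 ^ m` labellings.
-/

open Finset Function

lemma Function.FactorsThrough.ncard_range_le {α β γ : Type*} {g : α → γ} {f : α → β}
    (h : g.FactorsThrough f) (hf : (Set.range f).Finite) :
    (Set.range g).ncard ≤ (Set.range f).ncard := by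
  rcases isEmpty_or_nonempty α with _ | ⟨⟨a⟩⟩
  · simp [Set.range_eq_empty]
  have : Set.range g = extend f g (fun _ => g a) '' Set.range f := by
    rw [← Set.range_comp]
    exact congrArg Set.range (funext fun b => (h.extend_apply _ b).symm)
  rw [this]
  exact Set.ncard_image_le hf

namespace Finset

lemma card_filter_lt_card_filter_of_imp {ι : Type*} {p q : ι → Prop} [DecidablePred p]
    [DecidablePred q] {Q : Finset ι} (hpq : ∀ y, p y → q y) {x : ι} (hxQ : x ∈ Q)
    (hpx : ¬p x) (hqx : q x) : #{y ∈ Q | p y} < #{y ∈ Q | q y} :=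
  card_lt_card <| (ssubset_iff_of_subset (monotone_filter_right Q fun y _ => hpq y)).2
    ⟨x, mem_filter.2 ⟨hxQ, hqx⟩, fun h => hpx (mem_filter.1 h).2⟩

variable {α : Type*} [LinearOrder α] (Q : Finset α)

/-- The cell of `s` among the `2 * #Q + 1` cells into which `Q` cuts `α` (its points and the open
gaps between them), numbered from left to right; the points of `Q` get the odd numbers. -/
def cutIndex (s : α) : ℕ := #{x ∈ Q | x < s} + #{x ∈ Q | x ≤ s}

lemma cutIndex_le_two_mul_card (s : α) : Q.cutIndex s ≤ 2 * #Q := by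
  have := card_filter_le Q (· < s)
  have := card_filter_le Q (· ≤ s)
  unfold cutIndex
  omega

variable {Q}

lemma cutIndex_lt_cutIndex {s t x : α} (hst : s < t) (hxQ : x ∈ Q) (hx : x ∈ Set.Icc s t) :
    Q.cutIndex s < Q.cutIndex t := by
  have hlt : #{y ∈ Q | y < s} ≤ #{y ∈ Q | y < t} :=
    card_le_card <| monotone_filter_right Q fun _ _ h => h.trans hst
  have hle : #{y ∈ Q | y ≤ s} ≤ #{y ∈ Q | y ≤ t} :=
    card_le_card <| monotone_filter_right Q fun _ _ h => h.trans hst.le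
  unfold cutIndex
  rcases hx.2.lt_or_eq with hxt | rfl
  · have := card_filter_lt_card_filter_of_imp (p := (· < s)) (fun _ h => h.trans hst) hxQ
      hx.1.not_gt hxt
    omega
  · have := card_filter_lt_card_filter_of_imp (p := (· ≤ s)) (fun _ h => h.trans hst.le) hxQ
      hst.not_ge le_rfl
    omega

variable {β : Type*} {g : α → β}

lemma factorsThrough_cutIndex (hg : ∀ s t, s < t → (∀ x ∈ Q, x ∉ Set.Icc s t) → g s = g t) :
    g.FactorsThrough Q.cutIndex := by
  suffices ∀ s t, s ≤ t → Q.cutIndex s = Q.cutIndex t → g s = g t from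
    fun s t h => (le_total s t).elim (this s t · h) fun hts => (this t s hts h.symm).symm
  intro s t hst h
  rcases hst.lt_or_eq with hst | rfl
  · exact hg s t hst fun x hxQ hx => (cutIndex_lt_cutIndex hst hxQ hx).ne h
  · rfl

theorem ncard_range_le_of_forall_Icc
    (hg : ∀ s t, s < t → (∀ x ∈ Q, x ∉ Set.Icc s t) → g s = g t) :
    (Set.range g).ncard ≤ 2 * #Q + 1 := by
  have hcut : Set.range Q.cutIndex ⊆ Set.Iic (2 * #Q) :=
    Set.range_subset_iff.2 Q.cutIndex_le_two_mul_card
  calc (Set.range g).ncard ≤ (Set.range Q.cutIndex).ncard :=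
        (factorsThrough_cutIndex hg).ncard_range_le ((Set.finite_Iic _).subset hcut)
    _ ≤ 2 * #Q + 1 := by simpa using Set.ncard_le_ncard hcut

end Finset

lemma Set.pow_card_le_ncard_of_forall_finset_mem {ι : Type*} [Fintype ι] {S : Set (ι → Prop)}
    (hS : ∀ T : Finset ι, (· ∈ T) ∈ S) : 2 ^ Fintype.card ι ≤ S.ncard := by
  have hinj : Injective fun (T : Finset ι) (k : ι) => k ∈ T :=
    fun T T' h => Finset.ext fun k => iff_of_eq (congrFun h k)
  calc 2 ^ Fintype.card ι = (Set.range fun (T : Finset ι) (k : ι) => k ∈ T).ncard := by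
        rw [Set.ncard_range_of_injective hinj, Nat.card_eq_fintype_card, Fintype.card_finset]
    _ ≤ S.ncard := Set.ncard_le_ncard (Set.range_subset_iff.2 hS)

theorem stmt_15_general (m B : ℕ) (f : Fin m → ℝ → ℝ) (r : Fin m → ℝ)
    (P : Fin m → Finset ℝ) (hP : ∀ k, (P k).card ≤ B)
    (hflip : ∀ k : Fin m, ∀ s t : ℝ, s ≤ t → (∀ x ∈ P k, x ∉ Set.Icc s t) →
      (r k < f k s ↔ r k < f k t)) :
    {v : Fin m → Prop | ∃ s : ℝ, v = fun k => r k < f k s}.ncard ≤ 2 * m * B + 1 ∧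
      ((∀ T : Finset (Fin m), ∃ s : ℝ, ∀ k : Fin m, (r k < f k s ↔ k ∈ T)) →
        2 ^ m ≤ 2 * m * B + 1) := by
  set Q := univ.biUnion P
  have hQ : #Q ≤ m * B :=
    card_biUnion_le.trans (by simpa using sum_le_sum (s := univ) fun k _ => hP k)
  have hrange : {v : Fin m → Prop | ∃ s : ℝ, v = fun k => r k < f k s} =
      Set.range fun s k => r k < f k s := by
    ext v
    simp [eq_comm]
  have hcount := Q.ncard_range_le_of_forall_Icc (g := fun s k => r k < f k s)
    fun s t hst hs => funext fun k => propext <|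
      hflip k s t hst.le fun x hx => hs x (mem_biUnion.2 ⟨k, mem_univ k, hx⟩)
  have hbound : 2 * #Q + 1 ≤ 2 * m * B + 1 := by rw [mul_assoc]; omega
  rw [hrange]
  refine ⟨hcount.trans hbound, fun hshatter => ?_⟩
  have hall : ∀ T : Finset (Fin m), (· ∈ T) ∈ Set.range fun s k => r k < f k s := fun T =>
    let ⟨s, hs⟩ := hshatter T
    ⟨s, funext fun k => propext (hs k)⟩
  simpa using (Set.pow_card_le_ncard_of_forall_finset_mem hall).trans (hcount.trans hbound)

theorem stmt_15 (m B : ℕ) (hm : 1 ≤ m) (f : Fin m → ℝ → ℝ) (r : Fin m → ℝ)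
    (P : Fin m → Finset ℝ) (hP : ∀ k, (P k).card ≤ B)
    (hflip : ∀ k : Fin m, ∀ s t : ℝ, s ≤ t → (∀ x ∈ P k, x ∉ Set.Icc s t) →
      (r k < f k s ↔ r k < f k t)) :
    {v : Fin m → Prop | ∃ s : ℝ, v = fun k => r k < f k s}.ncard ≤ 2 * m * B + 1 ∧
      ((∀ T : Finset (Fin m), ∃ s : ℝ, ∀ k : Fin m, (r k < f k s ↔ k ∈ T)) →
        2 ^ m ≤ 2 * m * B + 1) :=
  stmt_15_general m B f r P hP hflip
end
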